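/- Let f be a finitely supported probability distribution on ℤ₊ and f_t = T_t f its thinning. With g_t defined by g_t(k) = −Σ_{l≤k} ∂/∂t f_t(l), we have g_t(k) ≥ 0 for all k ∈ ℤ and t ∈ [0,1]. -/

import Mathlib

open scoped BigOperators

noncomputable section

/-!
The thinned mass at `k` is `∑ₗ f l · b_{l,k}(t)` with Bernstein polynomials `b_{l,k}`, and
`b'_{l,k} = l (b_{l-1,k-1} - b_{l-1,k})`. Summing over `k' ≤ k` telescopes, so
`g_t(k) = ∑ₗ f l · l · b_{l-1,k}(t)`, a sum of nonnegative terms for `t ∈ [0, 1]`.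
-/

open Finset Polynomial

theorem Int.sum_Icc_zero_eq_sum_range {M : Type*} [AddCommMonoid M] (F : ℤ → M) {k : ℤ}
    (hk : 0 ≤ k) : ∑ j ∈ Icc 0 k, F j = ∑ m ∈ Finset.range (k.toNat + 1), F m := by
  rw [Int.Icc_eq_finset_map, sum_map, show (k + 1 - 0).toNat = k.toNat + 1 by omega]
  simp

namespace bernsteinPolynomial

variable {R : Type*} [CommRing R]

theorem eval_eq (n ν : ℕ) (x : R) :
    (bernsteinPolynomial R n ν).eval x = n.choose ν * x ^ ν * (1 - x) ^ (n - ν) := by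
  simp [bernsteinPolynomial]

theorem eval_nonneg [LinearOrder R] [IsStrictOrderedRing R] (n ν : ℕ) {x : R} (h₀ : 0 ≤ x)
    (h₁ : x ≤ 1) : 0 ≤ (bernsteinPolynomial R n ν).eval x := by
  have : 0 ≤ 1 - x := sub_nonneg.mpr h₁
  rw [eval_eq]
  positivity

theorem sum_range_derivative (n K : ℕ) :
    ∑ ν ∈ range (K + 1), derivative (bernsteinPolynomial R n ν) =
      -(n * bernsteinPolynomial R (n - 1) K) := by
  induction K with
  | zero => simp [derivative_zero]
  | succ K ih => rw [sum_range_succ, ih, derivative_succ]; ring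

end bernsteinPolynomial

section Thinning

variable {R : Type*} [CommRing R]

/-- The thinned mass at `k`, as a polynomial in the thinning parameter. -/
def thinningPoly (N : ℕ) (f : ℕ → R) (k : ℕ) : R[X] :=
  ∑ l ∈ range N, f l • bernsteinPolynomial R l k

theorem sum_range_derivative_thinningPoly (N : ℕ) (f : ℕ → R) (K : ℕ) :
    ∑ k ∈ range (K + 1), derivative (thinningPoly N f k) =
      -∑ l ∈ range N, f l • (l * bernsteinPolynomial R (l - 1) K) := by
  simp only [thinningPoly, derivative_sum, derivative_smul]
  rw [sum_comm, ← sum_neg_distrib]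
  refine sum_congr rfl fun l _ => ?_
  rw [← smul_sum, bernsteinPolynomial.sum_range_derivative, smul_neg]

end Thinning

theorem thinning_flux_nonneg_general
    (N : ℕ) (f : ℕ → ℝ)
    (hf : ∀ l, 0 ≤ f l)
    (ft : ℝ → ℤ → ℝ)
    (hft : ∀ t (k : ℤ), ft t k =
      if k < 0 then 0 else
        ∑ l ∈ Finset.range N,
          (l.choose k.toNat : ℝ) * t ^ k.toNat * (1 - t) ^ (l - k.toNat) * f l)
    (g : ℝ → ℤ → ℝ)
    (hg : ∀ t (k : ℤ), g t k = -∑ l ∈ Finset.Icc (0 : ℤ) k, deriv (fun s => ft s l) t)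
    (t : ℝ) (ht : t ∈ Set.Icc (0 : ℝ) 1) (k : ℤ) :
    0 ≤ g t k := by
  rcases lt_or_ge k 0 with hk | hk
  · simp [hg, Icc_eq_empty_of_lt hk]
  have hft_eval : ∀ m : ℕ, (fun s => ft s m) = fun s => (thinningPoly N f m).eval s := by
    intro m
    funext s
    simp [hft, thinningPoly, eval_finsetSum, bernsteinPolynomial.eval_eq, mul_comm]
  have hderiv : ∀ m : ℕ, deriv (fun s => ft s m) t = (derivative (thinningPoly N f m)).eval t :=
    fun m => by rw [hft_eval, Polynomial.deriv]
  rw [hg, Int.sum_Icc_zero_eq_sum_range _ hk, sum_congr rfl fun m _ => hderiv m,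
    ← eval_finsetSum, sum_range_derivative_thinningPoly, eval_neg, neg_neg, eval_finsetSum]
  refine sum_nonneg fun l _ => ?_
  rw [eval_smul, eval_mul, eval_natCast, smul_eq_mul]
  exact mul_nonneg (hf l) <|
    mul_nonneg l.cast_nonneg (bernsteinPolynomial.eval_nonneg _ _ ht.1 ht.2)

theorem thinning_flux_nonneg
    (N : ℕ) (f : ℕ → ℝ)
    (hf : ∀ l, 0 ≤ f l)
    (hsupp : ∀ l, N ≤ l → f l = 0)
    (hsum : ∑ l ∈ Finset.range N, f l = 1)
    (ft : ℝ → ℤ → ℝ)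
    (hft : ∀ t (k : ℤ), ft t k =
      if k < 0 then 0 else
        ∑ l ∈ Finset.range N,
          (l.choose k.toNat : ℝ) * t ^ k.toNat * (1 - t) ^ (l - k.toNat) * f l)
    (g : ℝ → ℤ → ℝ)
    (hg : ∀ t (k : ℤ), g t k = -∑ l ∈ Finset.Icc (0 : ℤ) k, deriv (fun s => ft s l) t)
    (t : ℝ) (ht : t ∈ Set.Icc (0 : ℝ) 1) (k : ℤ) :
    0 ≤ g t k :=
  thinning_flux_nonneg_general N f hf ft hft g hg t ht k
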